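/- Every formula φ in the fixpoint positive fragment with designated atom q is equivalent on all epistemic models to an announcement-free epistemic formula in which every occurrence of q is positive (lies under an even number of negations): there is an announcement-free epistemic formula ψ with all occurrences of q positive such that ⟦φ⟧_M = ⟦ψ⟧_M for every epistemic model M. -/
import Mathlib


/-- Formulas of public announcement logic (PAL):
atoms, negation, conjunction, knowledge `K_a φ`, and public announcement `[ψ]φ`. -/
inductive PAL (Agent Atom : Type*) : Type _
  | atom : Atom → PAL Agent Atom
  | neg : PAL Agent Atom → PAL Agent Atom
  | and : PAL Agent Atom → PAL Agent Atom → PAL Agent Atom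
  | know : Agent → PAL Agent Atom → PAL Agent Atom
  | ann : PAL Agent Atom → PAL Agent Atom → PAL Agent Atom

/-- An epistemic model: worlds, an equivalence relation for each agent, and a valuation. -/
structure EpiModel (Agent Atom : Type*) where
  W : Type*
  rel : Agent → W → W → Prop
  isEquiv : ∀ a, Equivalence (rel a)
  val : Atom → Set W

/-- Satisfaction of a PAL formula at a world `w`, relative to the current set `D` of
surviving worlds (announcements restrict `D`); the model proper is never changed, so the
restriction `M|ψ` is represented by shrinking `D`. -/
def PAL.sat {Agent Atom : Type*} (M : EpiModel Agent Atom) :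
    Set M.W → M.W → PAL Agent Atom → Prop
  | _, w, .atom p => w ∈ M.val p
  | D, w, .neg φ => ¬ PAL.sat M D w φ
  | D, w, .and φ ψ => PAL.sat M D w φ ∧ PAL.sat M D w ψ
  | D, w, .know a φ => ∀ v ∈ D, M.rel a w v → PAL.sat M D v φ
  | D, w, .ann ψ φ => PAL.sat M D w ψ → PAL.sat M {v ∈ D | PAL.sat M D v ψ} w φ

/-- The extension `⟦φ⟧_M` of a formula in a model. -/
def sem {Agent Atom : Type*} (M : EpiModel Agent Atom) (φ : PAL Agent Atom) : Set M.W :=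
  {w | PAL.sat M Set.univ w φ}

/-- `M[q↦X]`: the model `M` with the valuation of atom `q` replaced by `X`. -/
def EpiModel.reval {Agent Atom : Type*} (M : EpiModel Agent Atom) (q : Atom)
    (X : Set M.W) : EpiModel Agent Atom where
  W := M.W
  rel := M.rel
  isEquiv := M.isEquiv
  val := fun p => {w | (p = q ∧ w ∈ X) ∨ (p ≠ q ∧ w ∈ M.val p)}

/-- A formula is announcement-free (purely epistemic) if it contains no announcements. -/
def PAL.annFree {Agent Atom : Type*} : PAL Agent Atom → Prop
  | .atom _ => True
  | .neg φ => φ.annFree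
  | .and φ ψ => φ.annFree ∧ ψ.annFree
  | .know _ φ => φ.annFree
  | .ann _ _ => False

mutual
/-- Every occurrence of `q` in the (announcement-free) formula lies under an even number
of negations. -/
def PAL.posIn {Agent Atom : Type*} (q : Atom) : PAL Agent Atom → Prop
  | .atom _ => True
  | .neg φ => PAL.negIn q φ
  | .and φ ψ => PAL.posIn q φ ∧ PAL.posIn q ψ
  | .know _ φ => PAL.posIn q φ
  | .ann _ _ => False

/-- Every occurrence of `q` in the (announcement-free) formula lies under an odd number
of negations. -/
def PAL.negIn {Agent Atom : Type*} (q : Atom) : PAL Agent Atom → Prop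
  | .atom p => p ≠ q
  | .neg φ => PAL.posIn q φ
  | .and φ ψ => PAL.negIn q φ ∧ PAL.negIn q ψ
  | .know _ φ => PAL.negIn q φ
  | .ann _ _ => False
end

/-- `νq.φ` exists on `M`: with `U = ⋃ {X ⊆ W | X ⊆ ⟦φ⟧_{M[q↦X]}}`,
one has `U = ⟦φ⟧_{M[q↦U]}`. -/
def gfpExists {Agent Atom : Type*} (M : EpiModel Agent Atom) (q : Atom)
    (φ : PAL Agent Atom) : Prop :=
  ⋃₀ {X : Set M.W | X ⊆ sem (M.reval q X) φ} =
    sem (M.reval q (⋃₀ {X : Set M.W | X ⊆ sem (M.reval q X) φ})) φ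

/-- The fixpoint positive fragment `φ ::= q | p | ¬p | φ∨ψ | φ∧ψ | K_aφ | [¬ψ]φ`, where
`q` ranges over designated fixpoint variables and `p` over non-designated atoms. -/
inductive FPos (Agent Atom : Type*) (desig : Set Atom) : Type _
  | fvar : (q : Atom) → q ∈ desig → FPos Agent Atom desig
  | atom : (p : Atom) → p ∉ desig → FPos Agent Atom desig
  | natom : (p : Atom) → p ∉ desig → FPos Agent Atom desig
  | or : FPos Agent Atom desig → FPos Agent Atom desig → FPos Agent Atom desig
  | and : FPos Agent Atom desig → FPos Agent Atom desig → FPos Agent Atom desig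
  | know : Agent → FPos Agent Atom desig → FPos Agent Atom desig
  | ann : FPos Agent Atom desig → FPos Agent Atom desig → FPos Agent Atom desig

/-- Reading a formula of the fixpoint positive fragment as a PAL formula, with
`φ ∨ ψ := ¬(¬φ ∧ ¬ψ)` and with `FPos.ann ψ φ` read as the announcement `[¬ψ]φ`. -/
def FPos.toPAL {Agent Atom : Type*} {desig : Set Atom} :
    FPos Agent Atom desig → PAL Agent Atom
  | .fvar q _ => .atom q
  | .atom p _ => .atom p
  | .natom p _ => .neg (.atom p)
  | .or φ ψ => .neg (.and (.neg φ.toPAL) (.neg ψ.toPAL))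
  | .and φ ψ => .and φ.toPAL ψ.toPAL
  | .know a φ => .know a φ.toPAL
  | .ann ψ φ => .ann (.neg ψ.toPAL) φ.toPAL


/-- Relativization of an (announcement-free) formula by `χ`. -/
def relz {Agent Atom : Type*} (χ : PAL Agent Atom) : PAL Agent Atom → PAL Agent Atom
  | .atom p => .atom p
  | .neg φ => .neg (relz χ φ)
  | .and φ ψ => .and (relz χ φ) (relz χ ψ)
  | .know a φ => .know a (.neg (.and χ (.neg (relz χ φ))))
  | .ann _ φ => relz χ φ

mutual
/-- `q` positive and all knowledge operators positive, no announcements. -/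
def Good {Agent Atom : Type*} (q : Atom) : PAL Agent Atom → Prop
  | .atom _ => True
  | .neg φ => Bad q φ
  | .and φ ψ => Good q φ ∧ Good q ψ
  | .know _ φ => Good q φ
  | .ann _ _ => False

/-- `q` negative, no knowledge operators, no announcements. -/
def Bad {Agent Atom : Type*} (q : Atom) : PAL Agent Atom → Prop
  | .atom p => p ≠ q
  | .neg φ => Good q φ
  | .and φ ψ => Bad q φ ∧ Bad q ψ
  | .know _ _ => False
  | .ann _ _ => False
end

lemma good_bad_imp {Agent Atom : Type*} (q : Atom) (φ : PAL Agent Atom) :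
    (Good q φ → φ.annFree ∧ PAL.posIn q φ) ∧ (Bad q φ → φ.annFree ∧ PAL.negIn q φ) := by
  induction φ with
  | atom p => exact ⟨fun _ => ⟨trivial, trivial⟩, fun h => ⟨trivial, h⟩⟩
  | neg φ ih =>
      exact ⟨fun h => ⟨(ih.2 h).1, (ih.2 h).2⟩, fun h => ⟨(ih.1 h).1, (ih.1 h).2⟩⟩
  | and φ ψ ihφ ihψ =>
      exact ⟨fun h => ⟨⟨(ihφ.1 h.1).1, (ihψ.1 h.2).1⟩, ⟨(ihφ.1 h.1).2, (ihψ.1 h.2).2⟩⟩,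
        fun h => ⟨⟨(ihφ.2 h.1).1, (ihψ.2 h.2).1⟩, ⟨(ihφ.2 h.1).2, (ihψ.2 h.2).2⟩⟩⟩
  | know a φ ih =>
      exact ⟨fun h => ⟨(ih.1 h).1, (ih.1 h).2⟩, fun h => h.elim⟩
  | ann ψ φ _ _ => exact ⟨fun h => h.elim, fun h => h.elim⟩

lemma relz_good {Agent Atom : Type*} (q : Atom) (χ : PAL Agent Atom) (hχ : Bad q χ)
    (φ : PAL Agent Atom) :
    (Good q φ → Good q (relz χ φ)) ∧ (Bad q φ → Bad q (relz χ φ)) := by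
  induction φ with
  | atom p => exact ⟨fun _ => trivial, fun h => h⟩
  | neg φ ih => exact ⟨fun h => ih.2 h, fun h => ih.1 h⟩
  | and φ ψ ihφ ihψ =>
      exact ⟨fun h => ⟨ihφ.1 h.1, ihψ.1 h.2⟩, fun h => ⟨ihφ.2 h.1, ihψ.2 h.2⟩⟩
  | know a φ ih =>
      refine ⟨fun h => ?_, fun h => h.elim⟩
      show Bad q (.and χ (.neg (relz χ φ)))
      exact ⟨hχ, ih.1 h⟩
  | ann ψ φ _ _ => exact ⟨fun h => h.elim, fun h => h.elim⟩

lemma relz_sat {Agent Atom : Type*} (M : EpiModel Agent Atom) (χ : PAL Agent Atom)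
    (φ : PAL Agent Atom) (hφ : φ.annFree) :
    ∀ (D : Set M.W) (w : M.W),
      PAL.sat M D w (relz χ φ) ↔ PAL.sat M {v ∈ D | PAL.sat M D v χ} w φ := by
  induction φ with
  | atom p => intro D w; simp [relz, PAL.sat]
  | neg φ ih => intro D w; simp only [relz, PAL.sat]; rw [ih hφ]
  | and φ ψ ihφ ihψ =>
      intro D w; simp only [relz, PAL.sat]; rw [ihφ hφ.1, ihψ hφ.2]
  | know a φ ih =>
      intro D w
      simp only [relz, PAL.sat, Set.mem_setOf_eq, not_and, not_not]
      constructor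
      · intro h v hv hrel
        exact (ih hφ D v).mp (h v hv.1 hrel hv.2)
      · intro h v hv hrel hvχ
        exact (ih hφ D v).mpr (h v ⟨hv, hvχ⟩ hrel)
  | ann ψ φ _ _ => exact hφ.elim

/-- The announcement-free translation. -/
def tr {Agent Atom : Type*} {desig : Set Atom} : FPos Agent Atom desig → PAL Agent Atom
  | .fvar q _ => .atom q
  | .atom p _ => .atom p
  | .natom p _ => .neg (.atom p)
  | .or φ ψ => .neg (.and (.neg (tr φ)) (.neg (tr ψ)))
  | .and φ ψ => .and (tr φ) (tr ψ)
  | .know a φ => .know a (tr φ)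
  | .ann ψ φ => .neg (.and (.neg (tr ψ)) (.neg (relz (.neg (tr ψ)) (tr φ))))

lemma tr_good {Agent Atom : Type*} {desig : Set Atom} (q : Atom) (hq : q ∈ desig)
    (φ : FPos Agent Atom desig) : Good q (tr φ) := by
  induction φ with
  | fvar p hp => trivial
  | atom p hp => trivial
  | natom p hp =>
      show Bad q (.atom p)
      exact fun h => hp (h ▸ hq)
  | or φ ψ ihφ ihψ =>
      show Bad q (.and (.neg (tr φ)) (.neg (tr ψ)))
      exact ⟨ihφ, ihψ⟩
  | and φ ψ ihφ ihψ => exact ⟨ihφ, ihψ⟩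
  | know a φ ih => exact ih
  | ann ψ φ ihψ ihφ =>
      show Bad q (.and (.neg (tr ψ)) (.neg (relz (.neg (tr ψ)) (tr φ))))
      exact ⟨ihψ, (relz_good q (.neg (tr ψ)) (show Bad q (.neg (tr ψ)) from ihψ) (tr φ)).1 ihφ⟩

lemma relz_annFree {Agent Atom : Type*} (χ : PAL Agent Atom) (hχ : χ.annFree)
    (φ : PAL Agent Atom) (hφ : φ.annFree) : (relz χ φ).annFree := by
  induction φ with
  | atom p => trivial
  | neg φ ih => exact ih hφ
  | and φ ψ ihφ ihψ => exact ⟨ihφ hφ.1, ihψ hφ.2⟩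
  | know a φ ih => exact ⟨hχ, ih hφ⟩
  | ann ψ φ _ _ => exact hφ.elim

lemma tr_annFree {Agent Atom : Type*} {desig : Set Atom} (φ : FPos Agent Atom desig) :
    (tr φ).annFree := by
  induction φ with
  | fvar p hp => trivial
  | atom p hp => trivial
  | natom p hp => trivial
  | or φ ψ ihφ ihψ => exact ⟨ihφ, ihψ⟩
  | and φ ψ ihφ ihψ => exact ⟨ihφ, ihψ⟩
  | know a φ ih => exact ih
  | ann ψ φ ihψ ihφ => exact ⟨ihψ, relz_annFree (.neg (tr ψ)) ihψ (tr φ) ihφ⟩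

lemma tr_sat {Agent Atom : Type*} {desig : Set Atom} (M : EpiModel Agent Atom)
    (φ : FPos Agent Atom desig) :
    ∀ (D : Set M.W) (w : M.W), PAL.sat M D w φ.toPAL ↔ PAL.sat M D w (tr φ) := by
  induction φ with
  | fvar p hp => intro D w; rfl
  | atom p hp => intro D w; rfl
  | natom p hp => intro D w; rfl
  | or φ ψ ihφ ihψ =>
      intro D w
      simp only [FPos.toPAL, tr, PAL.sat]
      rw [ihφ D w, ihψ D w]
  | and φ ψ ihφ ihψ =>
      intro D w
      simp only [FPos.toPAL, tr, PAL.sat]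
      rw [ihφ D w, ihψ D w]
  | know a φ ih =>
      intro D w
      simp only [FPos.toPAL, tr, PAL.sat]
      exact forall₂_congr fun v hv => imp_congr Iff.rfl (ih D v)
  | ann ψ φ ihψ ihφ =>
      intro D w
      simp only [FPos.toPAL, tr, PAL.sat, not_and, not_not]
      rw [relz_sat M _ _ (tr_annFree φ) D w, ihψ D w]
      have h2 : {v ∈ D | PAL.sat M D v (PAL.neg (tr ψ))}
          = {v | v ∈ D ∧ ¬ PAL.sat M D v ψ.toPAL} := by
        ext v
        simp only [Set.mem_setOf_eq, Set.mem_sep_iff, PAL.sat]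
        rw [ihψ D v]
      rw [h2, ← ihφ {v | v ∈ D ∧ ¬ PAL.sat M D v ψ.toPAL} w]

/-- Every formula of the fixpoint positive fragment with designated fixpoint variable `q`
is equivalent on all epistemic models to an announcement-free epistemic formula in which
every occurrence of `q` is positive. -/
theorem stmt_18 {Agent Atom : Type*} (desig : Set Atom) (q : Atom) (hq : q ∈ desig)
    (φ : FPos Agent Atom desig) :
    ∃ ψ : PAL Agent Atom, ψ.annFree ∧ PAL.posIn q ψ ∧
      ∀ M : EpiModel Agent Atom, sem M φ.toPAL = sem M ψ := by
  refine ⟨tr φ, tr_annFree φ, (good_bad_imp q (tr φ)).1 (tr_good q hq φ) |>.2, fun M => ?_⟩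
  ext w
  exact tr_sat M φ Set.univ w
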